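/- The binary Boolean relation R = { (0,1) } ⊆ Bool² (i.e., the relation F(c₀) ∧ T(c₁) fixing its first argument to 0 and its second argument to 1) is a weak base of the co-clone it generates (this co-clone is IR₂ in Post's lattice): for every finite set Δ of Boolean relations with Pol(Δ) = Pol({R}) one has pPol(Δ) ⊆ pPol({R}). -/

import Mathlib

/-!
Every tuple of a singleton relation `{c}` is `c`, so a partial polymorphism `f` applied to
such tuples only ever sees constant columns. If `c` takes both values, `f` is therefore
defined on both constant tuples, and its restriction to the diagonal is a total unary
operation `g`. Applying `f` to copies of one tuple shows that `g` preserves everything `f`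
preserves, so `g ∈ Pol Δ = Pol {c}`, i.e. `g` fixes the values of `c`; hence the image of
`c` under `f` is `c` again.
-/

/-- A Boolean relation of arity `k`: a set of `k`-tuples over `Bool`. -/
abbrev BRel (k : ℕ) := Set (Fin k → Bool)

/-- A total `m`-ary Boolean operation `f` preserves a `k`-ary relation `R`. -/
def Preserves {m k : ℕ} (f : (Fin m → Bool) → Bool) (R : BRel k) : Prop :=
  ∀ ts : Fin m → Fin k → Bool, (∀ j, ts j ∈ R) → (fun i => f (fun j => ts j i)) ∈ R

/-- A partial `m`-ary Boolean operation (modelled with `Option Bool`; `none` =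
undefined) preserves a `k`-ary relation `R`. -/
def PPreserves {m k : ℕ} (f : (Fin m → Bool) → Option Bool) (R : BRel k) : Prop :=
  ∀ ts : Fin m → Fin k → Bool, (∀ j, ts j ∈ R) →
    ∀ u : Fin k → Bool, (∀ i, f (fun j => ts j i) = some (u i)) → u ∈ R

/-- The set of all (finitary, total) polymorphisms of a set of relations. -/
def Pol (Γ : Set (Σ k, BRel k)) : Set (Σ m, (Fin m → Bool) → Bool) :=
  { f | ∀ R ∈ Γ, Preserves f.2 R.2 }

/-- The set of all partial polymorphisms of a set of relations. -/
def pPol (Γ : Set (Σ k, BRel k)) : Set (Σ m, (Fin m → Bool) → Option Bool) :=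
  { f | ∀ R ∈ Γ, PPreserves f.2 R.2 }

/-- `R` is a weak base of the co-clone it generates: every finite `Δ` with the
same polymorphisms as `R` satisfies `pPol Δ ⊆ pPol {R}`. -/
def IsWeakBase {k : ℕ} (R : BRel k) : Prop :=
  ∀ Δ : Set (Σ k, BRel k), Δ.Finite →
    Pol Δ = Pol {⟨k, R⟩} → pPol Δ ⊆ pPol {⟨k, R⟩}

theorem Preserves.of_pPreserves_diagonal {m k : ℕ} {f : (Fin m → Bool) → Option Bool}
    {R : BRel k} (hf : PPreserves f R) {g : Bool → Bool}
    (hg : ∀ b, f (fun _ => b) = some (g b)) :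
    Preserves (fun x : Fin 1 → Bool => g (x 0)) R :=
  fun ts hts => hf (fun _ => ts 0) (fun _ => hts 0) _ fun i => hg (ts 0 i)

theorem mem_pol_of_mem_pPol_diagonal {Δ : Set (Σ k, BRel k)}
    {f : Σ m, (Fin m → Bool) → Option Bool} (hf : f ∈ pPol Δ) {g : Bool → Bool}
    (hg : ∀ b, f.2 (fun _ => b) = some (g b)) :
    (⟨1, fun x => g (x 0)⟩ : Σ m, (Fin m → Bool) → Bool) ∈ Pol Δ :=
  fun R hR => Preserves.of_pPreserves_diagonal (hf R hR) hg

theorem Preserves.apply_eq_of_singleton {k : ℕ} {c : Fin k → Bool} {g : Bool → Bool}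
    (hg : Preserves (fun x : Fin 1 → Bool => g (x 0)) {c}) (i : Fin k) : g (c i) = c i :=
  congrFun (hg (fun _ => c) fun _ => rfl) i

theorem isWeakBase_singleton {k : ℕ} {c : Fin k → Bool} (hc : Function.Surjective c) :
    IsWeakBase {c} := by
  intro Δ _ hPol f hf R hR ts hts u hu
  obtain rfl : R = ⟨k, {c}⟩ := hR
  have hts : ts = fun _ => c := funext hts
  subst hts
  let g : Bool → Bool := u ∘ Function.surjInv hc
  have hfu (i : Fin k) : f.2 (fun _ => c i) = some (u i) := hu i
  have hfg (b : Bool) : f.2 (fun _ => b) = some (g b) := by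
    have := hfu (Function.surjInv hc b)
    rwa [Function.surjInv_eq hc b] at this
  have hgPol := mem_pol_of_mem_pPol_diagonal hf hfg
  rw [hPol] at hgPol
  have hgc : ∀ i, g (c i) = c i := Preserves.apply_eq_of_singleton (hgPol ⟨k, {c}⟩ rfl)
  have hug (i : Fin k) : u i = g (c i) := Option.some_injective _ ((hfu i).symm.trans (hfg _))
  exact funext fun i => (hug i).trans (hgc i)

theorem stmt11 :
    IsWeakBase { t : Fin 2 → Bool | t 0 = false ∧ t 1 = true } := by
  have hR : { t : Fin 2 → Bool | t 0 = false ∧ t 1 = true } = {![false, true]} := by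
    ext t
    simp [funext_iff, Fin.forall_fin_two]
  rw [hR]
  refine isWeakBase_singleton fun b => ?_
  cases b
  · exact ⟨0, rfl⟩
  · exact ⟨1, rfl⟩
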